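/- arXiv:1810.01834 — 3 statements merged into one kernel-verified Lean document; each statement's English description precedes it below -/
import Mathlib

section
/- If every optimal ball contains at least one facility of a solution F, then F is a 2-approximation: cost(F) ≤ 2·OPT. -/
open Finset

/-- The k-center cost of a facility set `F`: the maximum over clients of the
distance to the nearest facility (junk value 0 for empty `F`). -/
noncomputable def cost {C : Type*} [MetricSpace C] [Fintype C] [Nonempty C]
    (F : Finset C) : ℝ :=
  if h : F.Nonempty then
    Finset.univ.sup' Finset.univ_nonempty (fun c => F.inf' h (fun f => dist c f))
  else 0

theorem cost_le_of_forall_exists_dist_le {C : Type*} [MetricSpace C] [Fintype C] [Nonempty C]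
    {F : Finset C} (hF : F.Nonempty) {r : ℝ} (h : ∀ c : C, ∃ f ∈ F, dist c f ≤ r) :
    cost F ≤ r := by
  rw [cost, dif_pos hF]
  refine Finset.sup'_le _ _ fun c _ => ?_
  obtain ⟨f, hfF, hcf⟩ := h c
  exact (Finset.inf'_le _ hfF).trans hcf

theorem stmt0_general {C : Type*} [MetricSpace C] [Fintype C] [Nonempty C]
    (k : ℕ) (o : Fin k → C)
    (OPT : ℝ)
    (hcover : ∀ c : C, ∃ t : Fin k, dist (o t) c ≤ OPT)
    (F : Finset C) (hF : F.Nonempty)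
    (hhit : ∀ t : Fin k, ∃ f ∈ F, dist (o t) f ≤ OPT) :
    cost F ≤ 2 * OPT := by
  refine cost_le_of_forall_exists_dist_le hF fun c => ?_
  obtain ⟨t, hct⟩ := hcover c
  obtain ⟨f, hfF, hft⟩ := hhit t
  refine ⟨f, hfF, ?_⟩
  calc dist c f ≤ dist (o t) c + dist (o t) f := dist_triangle_left c f (o t)
    _ ≤ 2 * OPT := by linarith

/-- If every optimal ball contains at least one facility of `F`, then
`cost F ≤ 2 * OPT`. -/
theorem stmt0 {C : Type*} [MetricSpace C] [Fintype C] [Nonempty C] [DecidableEq C]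
    (k : ℕ) (hk : 1 ≤ k) (o : Fin k → C)
    (OPT : ℝ) (hOPT : cost (Finset.univ.image o) = OPT)
    (hcover : ∀ c : C, ∃ t : Fin k, dist (o t) c ≤ OPT)
    (F : Finset C) (hF : F.Nonempty)
    (hhit : ∀ t : Fin k, ∃ f ∈ F, dist (o t) f ≤ OPT) :
    cost F ≤ 2 * OPT :=
  stmt0_general k o OPT hcover F hF hhit
end

section
/- Let Φ be a consolidation of F, let F' ⊆ F, let P_s ∈ Φ with P_s ∩ F' = {f}, and suppose there exist t and g with f, g ∈ F ∩ O_t and g ∉ P_s. Then Φ \ {P_s} is a consolidation of F'. -/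
/-! The member of `Φ` containing `f` and `g` is not `Pₛ`, so it can take over the only job `Pₛ`
has on `F'`: carrying `f`, alone or paired with itself. -/

open Finset

/-- `Φ` is a consolidation of `F` (with respect to optimal balls `O` and value `OPT`):
it covers `F`, each member has diameter at most `2·OPT`, and any two points of `F`
lying in a common optimal ball lie together in some member. -/
def IsConsolidation {C : Type*} [MetricSpace C] {k : ℕ} (OPT : ℝ)
    (O : Fin k → Set C) (F : Set C) (Φ : Finset (Set C)) : Prop :=
  (∀ f ∈ F, ∃ P ∈ Φ, f ∈ P) ∧
  (∀ P ∈ Φ, ∀ x ∈ P, ∀ y ∈ P, dist x y ≤ 2 * OPT) ∧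
  (∀ t : Fin k, ∀ f ∈ F ∩ O t, ∀ f' ∈ F ∩ O t, ∃ P ∈ Φ, f ∈ P ∧ f' ∈ P)

/-- The consolidation number `Γ(F)`: minimum cardinality of a consolidation of `F`. -/
noncomputable def consolidationNumber {C : Type*} [MetricSpace C] {k : ℕ} (OPT : ℝ)
    (O : Fin k → Set C) (F : Set C) : ℕ :=
  sInf {n : ℕ | ∃ Φ : Finset (Set C), IsConsolidation OPT O F Φ ∧ Φ.card = n}

theorem exists_mem_erase_of_subset_inter {α : Type*} [DecidableEq (Set α)]
    {Φ : Finset (Set α)} {F P Q : Set α} {f : α} (hP : P ∩ F ⊆ {f}) (hQ : Q ∈ Φ)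
    (hQP : Q ≠ P) (hfQ : f ∈ Q) {R : Set α} (hR : R ∈ Φ) {s : Set α} (hs : s ⊆ R ∩ F) :
    ∃ R' ∈ Φ.erase P, s ⊆ R' := by
  by_cases hRP : R = P
  · subst hRP
    exact ⟨Q, Finset.mem_erase.2 ⟨hQP, hQ⟩, fun x hx => (hP (hs hx) : x = f) ▸ hfQ⟩
  · exact ⟨R, Finset.mem_erase.2 ⟨hRP, hR⟩, fun x hx => (hs hx).1⟩

namespace IsConsolidation

variable {C : Type*} [MetricSpace C] {k : ℕ} {OPT : ℝ} {O : Fin k → Set C}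
  {F F' : Set C} {Φ : Finset (Set C)}

theorem mono (hΦ : IsConsolidation OPT O F Φ) (hsub : F' ⊆ F) :
    IsConsolidation OPT O F' Φ :=
  ⟨fun x hx => hΦ.1 x (hsub hx), hΦ.2.1, fun t x hx y hy =>
    hΦ.2.2 t x ⟨hsub hx.1, hx.2⟩ y ⟨hsub hy.1, hy.2⟩⟩

variable [DecidableEq (Set C)] {P Q : Set C} {f : C}

theorem erase (hΦ : IsConsolidation OPT O F Φ) (hP : P ∩ F ⊆ {f}) (hQ : Q ∈ Φ)
    (hQP : Q ≠ P) (hfQ : f ∈ Q) : IsConsolidation OPT O F (Φ.erase P) := by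
  refine ⟨fun x hx => ?_, fun R hR => hΦ.2.1 R (Finset.mem_of_mem_erase hR),
    fun t x hx y hy => ?_⟩
  · obtain ⟨R, hR, hxR⟩ := hΦ.1 x hx
    obtain ⟨R', hR', hsR'⟩ := exists_mem_erase_of_subset_inter hP hQ hQP hfQ hR
      (s := {x}) (by simpa using And.intro hxR hx)
    exact ⟨R', hR', hsR' rfl⟩
  · obtain ⟨R, hR, hxR, hyR⟩ := hΦ.2.2 t x hx y hy
    obtain ⟨R', hR', hsR'⟩ := exists_mem_erase_of_subset_inter hP hQ hQP hfQ hR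
      (s := {x, y}) (by simp [Set.insert_subset_iff, hxR, hyR, hx.1, hy.1])
    exact ⟨R', hR', hsR' (by simp), hsR' (by simp)⟩

end IsConsolidation

open Classical in
theorem stmt6_general {C : Type*} [MetricSpace C] {k : ℕ} (OPT : ℝ)
    (O : Fin k → Set C) (F F' : Set C) (hsub : F' ⊆ F)
    (Φ : Finset (Set C)) (hΦ : IsConsolidation OPT O F Φ)
    (Ps : Set C) (f : C) (hsing : Ps ∩ F' = {f})
    (hfg : ∃ t : Fin k, ∃ g, f ∈ F ∩ O t ∧ g ∈ F ∩ O t ∧ g ∉ Ps) :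
    IsConsolidation OPT O F' (Φ.erase Ps) := by
  obtain ⟨t, g, hf, hg, hgPs⟩ := hfg
  obtain ⟨Q, hQ, hfQ, hgQ⟩ := hΦ.2.2 t f hf g hg
  have hQPs : Q ≠ Ps := fun h => hgPs (h ▸ hgQ)
  exact (hΦ.mono hsub).erase hsing.le hQ hQPs hfQ

open Classical in
theorem stmt6 {C : Type*} [MetricSpace C] {k : ℕ} (OPT : ℝ)
    (O : Fin k → Set C) (F F' : Set C) (hsub : F' ⊆ F)
    (Φ : Finset (Set C)) (hΦ : IsConsolidation OPT O F Φ)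
    (Ps : Set C) (hPs : Ps ∈ Φ) (f : C) (hsing : Ps ∩ F' = {f})
    (hfg : ∃ t : Fin k, ∃ g, f ∈ F ∩ O t ∧ g ∈ F ∩ O t ∧ g ∉ Ps) :
    IsConsolidation OPT O F' (Φ.erase Ps) :=
  stmt6_general OPT O F F' hsub Φ hΦ Ps f hsing hfg
end

section
/- Let F_0 = C ⊇ F_1 ⊇ ... ⊇ F_{n-k} be the sequence of facility sets produced by the reverse greedy algorithm for k-center (each step removes the facility minimizing the resulting cost, |F_{n-k}| = k). Then cost(F_{n-k}) ≤ 2k·OPT, i.e., reverse greedy is a 2k-approximation for k-center. -/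
open Finset

lemma card_add_eq_of_erase_steps {α : Type*} [DecidableEq α] {Fs : ℕ → Finset α} {m : ℕ}
    (hstep : ∀ i < m, ∃ f ∈ Fs i, Fs (i + 1) = (Fs i).erase f) :
    ∀ t ≤ m, #(Fs t) + t = #(Fs 0) := by
  intro t
  induction t with
  | zero => simp
  | succ t ih =>
    intro ht
    obtain ⟨f, hf, hFs⟩ := hstep t ht
    have := card_pos.2 ⟨f, hf⟩
    rw [hFs, card_erase_of_mem hf, ← ih (Nat.le_of_succ_le ht)]
    omega

section

variable {C : Type*} [MetricSpace C]

def CoversWithin (S : Finset C) (D : ℝ) : Prop :=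
  ∀ y : C, ∃ s ∈ S, dist y s ≤ D

lemma CoversWithin.mono {S T : Finset C} {D D' : ℝ} (h : CoversWithin S D) (hST : S ⊆ T)
    (hD : D ≤ D') : CoversWithin T D' := fun y =>
  let ⟨s, hs, hys⟩ := h y
  ⟨s, hST hs, hys.trans hD⟩

lemma CoversWithin.trans {S T : Finset C} {a b : ℝ} (hS : CoversWithin S a)
    (hST : ∀ s ∈ S, ∃ t ∈ T, dist s t ≤ b) : CoversWithin T (a + b) := fun y => by
  obtain ⟨s, hs, hys⟩ := hS y
  obtain ⟨t, ht, hst⟩ := hST s hs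
  exact ⟨t, ht, (dist_triangle y s t).trans (add_le_add hys hst)⟩

lemma CoversWithin.nonneg [Nonempty C] {S : Finset C} {D : ℝ} (h : CoversWithin S D) :
    0 ≤ D :=
  let ⟨_, _, hys⟩ := h (Classical.arbitrary C)
  dist_nonneg.trans hys

lemma cost_le_iff [Fintype C] [Nonempty C] {F : Finset C} (hF : F.Nonempty) {B : ℝ} :
    cost F ≤ B ↔ CoversWithin F B := by
  simp only [cost, dif_pos hF, sup'_le_iff, mem_univ, true_implies, inf'_le_iff, CoversWithin]

noncomputable def aliveCenters (O : Finset C) (r : ℝ) (F : Finset C) : Finset C :=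
  O.filter fun o => ∃ f ∈ F, dist o f ≤ r

variable {O F G : Finset C} {r : ℝ}

lemma mem_aliveCenters {o : C} : o ∈ aliveCenters O r F ↔ o ∈ O ∧ ∃ f ∈ F, dist o f ≤ r :=
  mem_filter

lemma aliveCenters_subset : aliveCenters O r F ⊆ O := filter_subset _ _

lemma aliveCenters_mono (hFG : F ⊆ G) : aliveCenters O r F ⊆ aliveCenters O r G :=
  fun _ ho =>
    let ⟨hoO, f, hf, hof⟩ := mem_aliveCenters.1 ho
    mem_aliveCenters.2 ⟨hoO, f, hFG hf, hof⟩

lemma aliveCenters_univ [Fintype C] (hr : 0 ≤ r) : aliveCenters O r univ = O :=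
  filter_true_of_mem fun o _ => ⟨o, mem_univ o, by rwa [dist_self]⟩

lemma exists_aliveCenters_subset_erase [DecidableEq C] (hOF : #O < #F) :
    ∃ g ∈ F, aliveCenters O r F ⊆ aliveCenters O r (F.erase g) := by
  choose! ρ hρF hρd using fun o (ho : o ∈ aliveCenters O r F) => (mem_aliveCenters.1 ho).2
  have hcard : #((aliveCenters O r F).image ρ) < #F :=
    (card_image_le.trans (card_le_card aliveCenters_subset)).trans_lt hOF
  obtain ⟨g, hg, hgρ⟩ := exists_mem_notMem_of_card_lt_card hcard
  refine ⟨g, hg, fun o ho => mem_aliveCenters.2 ⟨aliveCenters_subset ho, ρ o, ?_, hρd o ho⟩⟩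
  exact mem_erase.2 ⟨fun h => hgρ (h ▸ mem_image_of_mem ρ ho), hρF o ho⟩

variable [Fintype C] [Nonempty C]

lemma cost_le_of_coversWithin_aliveCenters {D : ℝ} (h : CoversWithin (aliveCenters O r F) D) :
    cost F ≤ D + r := by
  obtain ⟨o, ho, -⟩ := h (Classical.arbitrary C)
  obtain ⟨-, f, hf, -⟩ := mem_aliveCenters.1 ho
  exact (cost_le_iff ⟨f, hf⟩).2 (h.trans fun o ho => (mem_aliveCenters.1 ho).2)

lemma coversWithin_aliveCenters (hO : CoversWithin O r) (hF : F.Nonempty) :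
    CoversWithin (aliveCenters O r F) (cost F + r) :=
  ((cost_le_iff hF).1 le_rfl).trans fun f hf =>
    let ⟨o, ho, hfo⟩ := hO f
    ⟨o, mem_aliveCenters.2 ⟨ho, f, hf, by rwa [dist_comm]⟩, hfo⟩

lemma CoversWithin.aliveCenters_erase [DecidableEq C] {D : ℝ} {f : C} (hO : CoversWithin O r)
    (hOF : #O < #F) (hf : ∀ g ∈ F, cost (F.erase f) ≤ cost (F.erase g))
    (hF : CoversWithin (aliveCenters O r F) D) :
    CoversWithin (aliveCenters O r (F.erase f))
      (D + 2 * r * (#(aliveCenters O r F) - #(aliveCenters O r (F.erase f)) : ℝ)) := by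
  obtain ⟨g, hg, hAg⟩ := exists_aliveCenters_subset_erase (r := r) hOF
  rcases (aliveCenters_mono (erase_subset f F)).eq_or_ssubset with heq | hlt
  · rwa [heq, sub_self, mul_zero, add_zero]
  · have hcost : cost (F.erase f) ≤ D + r :=
      (hf g hg).trans (cost_le_of_coversWithin_aliveCenters (hF.mono hAg le_rfl))
    have hdead : (#(aliveCenters O r (F.erase f)) : ℝ) + 1 ≤ #(aliveCenters O r F) := by
      exact_mod_cast card_lt_card hlt
    have hne : (F.erase f).Nonempty := by
      obtain ⟨o, ho, -⟩ := hO (Classical.arbitrary C)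
      have := card_pos.2 ⟨o, ho⟩
      exact card_pos.1 ((by omega : 0 < #F - 1).trans_le (pred_card_le_card_erase))
    refine (coversWithin_aliveCenters hO hne).mono subset_rfl ?_
    nlinarith [hO.nonneg]

end

theorem stmt10_general {C : Type*} [MetricSpace C] [Fintype C] [Nonempty C] [DecidableEq C]
    (k : ℕ) (hk : 1 ≤ k)
    (OPT : ℝ)
    (hOPT : IsLeast {x : ℝ | ∃ F : Finset C, F.card = k ∧ cost F = x} OPT)
    (Fs : ℕ → Finset C) (h0 : Fs 0 = Finset.univ)
    (hstep : ∀ i < Fintype.card C - k, ∃ f ∈ Fs i,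
      Fs (i + 1) = (Fs i).erase f ∧
      ∀ g ∈ Fs i, cost ((Fs i).erase f) ≤ cost ((Fs i).erase g)) :
    cost (Fs (Fintype.card C - k)) ≤ 2 * k * OPT := by
  obtain ⟨⟨O, hOk, hOcost⟩, -⟩ := hOPT
  have hO : CoversWithin O OPT := (cost_le_iff (card_pos.1 (by omega))).1 hOcost.le
  have hcard := card_add_eq_of_erase_steps fun i hi =>
    (hstep i hi).imp fun _ ⟨hf, hFs, _⟩ => ⟨hf, hFs⟩
  rw [h0, card_univ] at hcard
  have hinv : ∀ t ≤ Fintype.card C - k, CoversWithin (aliveCenters O OPT (Fs t))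
      (OPT + 2 * OPT * (k - #(aliveCenters O OPT (Fs t)) : ℝ)) := by
    intro t
    induction t with
    | zero => intro _; simpa [h0, aliveCenters_univ hO.nonneg, hOk] using hO
    | succ t ih =>
      intro ht
      obtain ⟨f, -, hFs, hf⟩ := hstep t ht
      have hOF : #O < #(Fs t) := by have := hcard t (Nat.le_of_succ_le ht); omega
      rw [hFs]
      exact (hO.aliveCenters_erase hOF hf (ih (Nat.le_of_succ_le ht))).mono subset_rfl
        (le_of_eq (by ring))
  have hend := hinv _ le_rfl
  obtain ⟨o, ho, -⟩ := hend (Classical.arbitrary C)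
  have halive : (1 : ℝ) ≤ #(aliveCenters O OPT (Fs (Fintype.card C - k))) := by
    exact_mod_cast card_pos.2 ⟨o, ho⟩
  calc cost (Fs (Fintype.card C - k))
      ≤ OPT + 2 * OPT * (k - #(aliveCenters O OPT (Fs (Fintype.card C - k))) : ℝ) + OPT :=
        cost_le_of_coversWithin_aliveCenters hend
    _ ≤ 2 * k * OPT := by nlinarith [hO.nonneg]

/-- Reverse greedy is a `2k`-approximation for k-center: any execution
(starting from all of `C`, repeatedly removing a facility whose removal
increases the cost the least, for `n − k` steps) ends with cost at most
`2k·OPT`. -/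
theorem stmt10 {C : Type*} [MetricSpace C] [Fintype C] [Nonempty C] [DecidableEq C]
    (k : ℕ) (hk : 1 ≤ k) (hkn : k ≤ Fintype.card C)
    (OPT : ℝ)
    (hOPT : IsLeast {x : ℝ | ∃ F : Finset C, F.card = k ∧ cost F = x} OPT)
    (Fs : ℕ → Finset C) (h0 : Fs 0 = Finset.univ)
    (hstep : ∀ i < Fintype.card C - k, ∃ f ∈ Fs i,
      Fs (i + 1) = (Fs i).erase f ∧
      ∀ g ∈ Fs i, cost ((Fs i).erase f) ≤ cost ((Fs i).erase g)) :
    cost (Fs (Fintype.card C - k)) ≤ 2 * k * OPT :=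
  stmt10_general k hk OPT hOPT Fs h0 hstep
end
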